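/- (Key inequality in Theorem 2) Let ω ∈ (0,2) and θ ≥ 0 be such that δ = 2θ/ω + ((2−ω)/ω)·minᵢ Dᵢᵢ > 0. Let x* be a global minimizer of f, let z be a triangle-proximal point of x, and suppose the error bound ‖x − x*‖ ≤ η·‖x − z‖ holds for some constant η > 0. Then f(z) − f(x*) ≤ C₁·(f(x) − f(z)), where C₁ = ((3 + η²)‖C‖ + 2(η² + 1)‖A‖)/δ. -/

import Mathlib

open scoped RealInnerProductSpace
open Matrix Filter

noncomputable section

/-- Euclidean space ℝⁿ. -/
abbrev E (n : ℕ) := EuclideanSpace ℝ (Fin n)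

/-- Matrix-vector multiplication, valued in Euclidean space. -/
def mulVecE {n : ℕ} (M : Matrix (Fin n) (Fin n) ℝ) (x : E n) : E n :=
  (WithLp.equiv 2 (Fin n → ℝ)).symm (M.mulVec ((WithLp.equiv 2 (Fin n → ℝ)) x))

/-- Operator (spectral) norm of a matrix. -/
def opNorm {n : ℕ} (M : Matrix (Fin n) (Fin n) ℝ) : ℝ :=
  ‖Matrix.toEuclideanCLM (𝕜 := ℝ) M‖

/-- The diagonal part `D` of `A`. -/
def Dmat {n : ℕ} (A : Matrix (Fin n) (Fin n) ℝ) : Matrix (Fin n) (Fin n) ℝ :=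
  Matrix.diagonal fun i => A i i

/-- The strictly lower triangular part `L` of `A`. -/
def Lmat {n : ℕ} (A : Matrix (Fin n) (Fin n) ℝ) : Matrix (Fin n) (Fin n) ℝ :=
  Matrix.of fun i j => if (j : ℕ) < (i : ℕ) then A i j else 0

/-- `B = L + (1/ω)(D + θI)`. -/
def Bmat {n : ℕ} (ω θ : ℝ) (A : Matrix (Fin n) (Fin n) ℝ) : Matrix (Fin n) (Fin n) ℝ :=
  Lmat A + ω⁻¹ • (Dmat A + θ • (1 : Matrix (Fin n) (Fin n) ℝ))

/-- `C = Lᵀ + (1/ω)((ω−1)D − θI)`. -/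
def Cmat {n : ℕ} (ω θ : ℝ) (A : Matrix (Fin n) (Fin n) ℝ) : Matrix (Fin n) (Fin n) ℝ :=
  (Lmat A)ᵀ + ω⁻¹ • ((ω - 1) • Dmat A - θ • (1 : Matrix (Fin n) (Fin n) ℝ))

/-- `v` is a subgradient of `h` at `z`. -/
def IsSubgradient {n : ℕ} (h : E n → ℝ) (v z : E n) : Prop :=
  ∀ y, h z + ⟪v, y - z⟫ ≤ h y

/-- The composite objective `f(x) = (1/2)⟨x, Ax⟩ + ⟨b, x⟩ + h(x)`. -/
def fObj {n : ℕ} (A : Matrix (Fin n) (Fin n) ℝ) (b : E n) (h : E n → ℝ) (x : E n) : ℝ :=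
  (1/2) * ⟪x, mulVecE A x⟫ + ⟪b, x⟫ + h x

/-- `z` is a triangle-proximal point of `x`: there is a subgradient `v` of `h` at `z`
with `Bz + b + Cx + v = 0`. -/
def IsTriangleProx {n : ℕ} (ω θ : ℝ) (A : Matrix (Fin n) (Fin n) ℝ) (b : E n)
    (h : E n → ℝ) (x z : E n) : Prop :=
  ∃ v, IsSubgradient h v z ∧
    mulVecE (Bmat ω θ A) z + b + mulVecE (Cmat ω θ A) x + v = 0

/-!
Since `B + C = A`, the condition `B z + b + C x + v = 0` reads `A z + b + v = -C (x - z)`, so the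
subgradient inequality for `h` at `z` together with the exact expansion of the quadratic part gives,
for every `y`,
  `f z - f y ≤ ⟪C (x - z), y - z⟫ - ½ ⟪y - z, A (y - z)⟫`.
At `y = x` the right-hand side is `-½ ⟪x - z, (B - C) (x - z)⟫ ≤ -(δ / 2) ‖x - z‖²`, because the
skew part `L - Lᵀ` of `B - C` has zero quadratic form and its diagonal part is at least
`(2θ + (2 - ω) minᵢ Dᵢᵢ) / ω`. At `y = x*` it is at most
`‖A‖ / 2 ‖z - x*‖² + ‖C‖ ‖x - z‖ ‖z - x*‖`, and the error bound gives
`‖z - x*‖ ≤ (1 + η) ‖x - z‖`. Comparing the two estimates gives `C₁`.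
-/

section QuadraticComposite

variable {F : Type*} [NormedAddCommGroup F] [InnerProductSpace ℝ F]

def quadComposite (A : F →L[ℝ] F) (b : F) (h : F → ℝ) (x : F) : ℝ :=
  (1 / 2) * ⟪x, A x⟫ + ⟪b, x⟫ + h x

variable {A B C : F →L[ℝ] F} {b : F} {h : F → ℝ} {v x z : F}

lemma inner_add_apply_add_of_isSymmetric (hA : (A : F →ₗ[ℝ] F).IsSymmetric) (u d : F) :
    ⟪u + d, A (u + d)⟫ = ⟪u, A u⟫ + 2 * ⟪A u, d⟫ + ⟪d, A d⟫ := by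
  have hud : ⟪u, A d⟫ = ⟪A u, d⟫ := (hA u d).symm
  rw [map_add, inner_add_left, inner_add_right, inner_add_right, hud, real_inner_comm (A u) d]
  ring

lemma quadComposite_add_inner_le_of_subgradient (hA : (A : F →ₗ[ℝ] F).IsSymmetric)
    (hv : ∀ y, h z + ⟪v, y - z⟫ ≤ h y) (y : F) :
    quadComposite A b h z + ⟪A z + b + v, y - z⟫ + (1 / 2) * ⟪y - z, A (y - z)⟫
      ≤ quadComposite A b h y := by
  have hq := inner_add_apply_add_of_isSymmetric hA z (y - z)
  have hb : ⟪b, y⟫ = ⟪b, z⟫ + ⟪b, y - z⟫ := by rw [← inner_add_right, add_sub_cancel]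
  rw [add_sub_cancel] at hq
  unfold quadComposite
  rw [inner_add_left, inner_add_left]
  linarith [hv y]

lemma quadComposite_sub_le_of_prox (hBC : B + C = A) (hA : (A : F →ₗ[ℝ] F).IsSymmetric)
    (hv : ∀ y, h z + ⟪v, y - z⟫ ≤ h y) (hopt : B z + b + C x + v = 0) (y : F) :
    quadComposite A b h z - quadComposite A b h y
      ≤ ⟪C (x - z), y - z⟫ - (1 / 2) * ⟪y - z, A (y - z)⟫ := by
  have hgrad : A z + b + v = -C (x - z) := by
    refine eq_neg_of_add_eq_zero_left ?_
    rw [← hopt, ← hBC, _root_.add_apply, map_sub]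
    abel
  have := quadComposite_add_inner_le_of_subgradient (b := b) hA hv y
  rw [hgrad, inner_neg_left] at this
  linarith

lemma half_inner_sub_le_quadComposite_sub (hBC : B + C = A)
    (hA : (A : F →ₗ[ℝ] F).IsSymmetric) (hv : ∀ y, h z + ⟪v, y - z⟫ ≤ h y)
    (hopt : B z + b + C x + v = 0) :
    (1 / 2) * ⟪x - z, (B - C) (x - z)⟫ ≤ quadComposite A b h x - quadComposite A b h z := by
  have hsplit : ⟪x - z, A (x - z)⟫ = ⟪x - z, B (x - z)⟫ + ⟪x - z, C (x - z)⟫ := by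
    rw [← hBC, _root_.add_apply, inner_add_right]
  have := quadComposite_sub_le_of_prox hBC hA hv hopt x
  rw [real_inner_comm (x - z) (C (x - z))] at this
  rw [_root_.sub_apply, inner_sub_right]
  linarith

lemma quadComposite_sub_le_norm_of_prox (hBC : B + C = A)
    (hA : (A : F →ₗ[ℝ] F).IsSymmetric) (hv : ∀ y, h z + ⟪v, y - z⟫ ≤ h y)
    (hopt : B z + b + C x + v = 0) (y : F) :
    quadComposite A b h z - quadComposite A b h y
      ≤ ‖A‖ / 2 * ‖z - y‖ ^ 2 + ‖C‖ * ‖x - z‖ * ‖z - y‖ := by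
  have hC : ⟪C (x - z), y - z⟫ ≤ ‖C‖ * ‖x - z‖ * ‖z - y‖ :=
    calc ⟪C (x - z), y - z⟫ ≤ ‖C (x - z)‖ * ‖y - z‖ := real_inner_le_norm _ _
      _ ≤ ‖C‖ * ‖x - z‖ * ‖z - y‖ := by
        rw [norm_sub_rev y z]; gcongr; exact C.le_opNorm _
  have hAbound : -⟪y - z, A (y - z)⟫ ≤ ‖A‖ * ‖z - y‖ ^ 2 :=
    calc -⟪y - z, A (y - z)⟫ ≤ ‖y - z‖ * ‖A (y - z)‖ :=
          (neg_le_abs _).trans (abs_real_inner_le_norm _ _)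
      _ ≤ ‖y - z‖ * (‖A‖ * ‖y - z‖) := by gcongr; exact A.le_opNorm _
      _ = ‖A‖ * ‖z - y‖ ^ 2 := by rw [norm_sub_rev]; ring
  linarith [quadComposite_sub_le_of_prox hBC hA hv hopt y]

end QuadraticComposite

section EuclideanMatrix

variable {ι : Type*} [Fintype ι] [DecidableEq ι]

lemma Matrix.IsSymm.isSymmetric_toEuclideanCLM {A : Matrix ι ι ℝ} (hA : A.IsSymm) :
    (toEuclideanCLM (𝕜 := ℝ) A : EuclideanSpace ℝ ι →ₗ[ℝ] EuclideanSpace ℝ ι).IsSymmetric := by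
  rw [coe_toEuclideanCLM_eq_toEuclideanLin, isSymmetric_toEuclideanLin_iff, isHermitian_iff_isSymm]
  exact hA

lemma inner_toEuclideanCLM_sub_transpose_self (K : Matrix ι ι ℝ) (x : EuclideanSpace ℝ ι) :
    ⟪x, toEuclideanCLM (𝕜 := ℝ) (K - Kᵀ) x⟫ = 0 := by
  rw [inner_toEuclideanCLM, sub_mulVec, dotProduct_sub, dotProduct_mulVec _ Kᵀ, vecMul_transpose,
    dotProduct_comm, sub_self]

lemma iInf_mul_norm_sq_le_inner_toEuclideanCLM_diagonal (c : ι → ℝ) (x : EuclideanSpace ℝ ι) :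
    (⨅ i, c i) * ‖x‖ ^ 2 ≤ ⟪x, toEuclideanCLM (𝕜 := ℝ) (diagonal c) x⟫ := by
  rw [inner_toEuclideanCLM, EuclideanSpace.norm_sq_eq, Finset.mul_sum]
  refine Finset.sum_le_sum fun i _ => ?_
  have hci : ⨅ j, c j ≤ c i := ciInf_le (Set.finite_range c).bddBelow i
  rw [mulVec_diagonal, Real.norm_eq_abs, sq_abs]
  nlinarith [sq_nonneg (x i)]

end EuclideanMatrix

section Splitting

variable {n : ℕ}

lemma fObj_eq_quadComposite (A : Matrix (Fin n) (Fin n) ℝ) (b : E n) (h : E n → ℝ) :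
    fObj A b h = quadComposite (toEuclideanCLM (𝕜 := ℝ) A) b h := rfl

lemma Lmat_add_Dmat_add_transpose {A : Matrix (Fin n) (Fin n) ℝ} (hA : A.IsSymm) :
    Lmat A + Dmat A + (Lmat A)ᵀ = A := by
  ext i j
  simp only [Lmat, Dmat, Matrix.add_apply, of_apply, transpose_apply, diagonal_apply]
  rcases lt_trichotomy i j with hij | rfl | hij
  · simp [hij, hij.ne, not_lt_of_gt hij, hA.apply]
  · simp
  · simp [hij, hij.ne', not_lt_of_gt hij]

lemma Bmat_add_Cmat {ω : ℝ} (hω : ω ≠ 0) (θ : ℝ) {A : Matrix (Fin n) (Fin n) ℝ} (hA : A.IsSymm) :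
    Bmat ω θ A + Cmat ω θ A = A := by
  conv_rhs => rw [← Lmat_add_Dmat_add_transpose hA]
  ext i j
  simp only [Bmat, Cmat, Matrix.add_apply, Matrix.smul_apply, Matrix.sub_apply, smul_eq_mul]
  field_simp
  ring

lemma Bmat_sub_Cmat (ω θ : ℝ) (A : Matrix (Fin n) (Fin n) ℝ) :
    Bmat ω θ A - Cmat ω θ A
      = (Lmat A - (Lmat A)ᵀ)
        + ω⁻¹ • ((2 - ω) • Dmat A + (2 * θ) • (1 : Matrix (Fin n) (Fin n) ℝ)) := by
  ext i j
  simp only [Bmat, Cmat, Matrix.add_apply, Matrix.sub_apply, Matrix.smul_apply, smul_eq_mul]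
  ring

lemma mul_norm_sq_le_inner_Bmat_sub_Cmat {ω : ℝ} (hω₀ : 0 < ω) (hω₂ : ω ≤ 2) (θ : ℝ)
    (A : Matrix (Fin n) (Fin n) ℝ) (x : E n) :
    (2 * θ / ω + (2 - ω) / ω * ⨅ i, A i i) * ‖x‖ ^ 2
      ≤ ⟪x, (toEuclideanCLM (𝕜 := ℝ) (Bmat ω θ A) - toEuclideanCLM (𝕜 := ℝ) (Cmat ω θ A)) x⟫ := by
  have hD := iInf_mul_norm_sq_le_inner_toEuclideanCLM_diagonal (fun i => A i i) x
  rw [← map_sub, Bmat_sub_Cmat, map_add, map_smul, map_add, map_smul, map_smul, map_one]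
  simp only [_root_.add_apply, _root_.smul_apply, one_apply_eq_self, inner_add_right,
    inner_smul_right, inner_toEuclideanCLM_sub_transpose_self, real_inner_self_eq_norm_sq]
  have : (2 - ω) * ((⨅ i, A i i) * ‖x‖ ^ 2) ≤ (2 - ω) * ⟪x, toEuclideanCLM (𝕜 := ℝ) (Dmat A) x⟫ :=
    mul_le_mul_of_nonneg_left hD (by linarith)
  rw [zero_add, show (2 * θ / ω + (2 - ω) / ω * ⨅ i, A i i) * ‖x‖ ^ 2
      = ω⁻¹ * ((2 - ω) * ((⨅ i, A i i) * ‖x‖ ^ 2) + 2 * θ * ‖x‖ ^ 2) by field_simp; ring]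
  exact mul_le_mul_of_nonneg_left (by linarith) (inv_nonneg.2 hω₀.le)

end Splitting

-- The constants come from `(1 + η) ^ 2 ≤ 2 * (η ^ 2 + 1)` and `1 + η ≤ (3 + η ^ 2) / 2`.
lemma half_mul_sq_add_mul_le {a c η s t : ℝ} (ha : 0 ≤ a) (hc : 0 ≤ c) (hs : 0 ≤ s)
    (ht₀ : 0 ≤ t) (ht : t ≤ (1 + η) * s) :
    a / 2 * t ^ 2 + c * s * t ≤ ((3 + η ^ 2) * c + 2 * (η ^ 2 + 1) * a) / 2 * s ^ 2 := by
  have hts : t * t ≤ (1 + η) * s * ((1 + η) * s) := mul_self_le_mul_self ht₀ ht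
  have hst : s * t ≤ s * ((1 + η) * s) := mul_le_mul_of_nonneg_left ht hs
  nlinarith [mul_nonneg ha (mul_nonneg (sq_nonneg s) (sq_nonneg (η - 1))),
    mul_nonneg hc (mul_nonneg (sq_nonneg s) (sq_nonneg (η - 1)))]

theorem msm_key_inequality_thm2_general {n : ℕ}
    (A : Matrix (Fin n) (Fin n) ℝ) (hA : A.IsSymm) (b : E n) (h : E n → ℝ)
    (ω θ : ℝ) (hω : ω ∈ Set.Ioo (0 : ℝ) 2)
    (δ : ℝ) (hδ : δ = 2 * θ / ω + (2 - ω) / ω * ⨅ i, A i i) (hδpos : 0 < δ)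
    (xstar : E n)
    (x z : E n) (hz : IsTriangleProx ω θ A b h x z)
    (η : ℝ) (herr : ‖x - xstar‖ ≤ η * ‖x - z‖)
    (C₁ : ℝ)
    (hC₁ : C₁ = ((3 + η ^ 2) * opNorm (Cmat ω θ A)
        + 2 * (η ^ 2 + 1) * opNorm A) / δ) :
    fObj A b h z - fObj A b h xstar ≤ C₁ * (fObj A b h x - fObj A b h z) := by
  obtain ⟨v, hv, hopt⟩ := hz
  rw [fObj_eq_quadComposite]
  have hBC : toEuclideanCLM (𝕜 := ℝ) (Bmat ω θ A) + toEuclideanCLM (𝕜 := ℝ) (Cmat ω θ A)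
      = toEuclideanCLM (𝕜 := ℝ) A := by rw [← map_add, Bmat_add_Cmat hω.1.ne' θ hA]
  have hdescent : δ / 2 * ‖x - z‖ ^ 2 ≤ quadComposite (toEuclideanCLM (𝕜 := ℝ) A) b h x
      - quadComposite (toEuclideanCLM (𝕜 := ℝ) A) b h z := by
    have := mul_norm_sq_le_inner_Bmat_sub_Cmat hω.1 hω.2.le θ A (x - z)
    rw [← hδ] at this
    linarith [half_inner_sub_le_quadComposite_sub hBC hA.isSymmetric_toEuclideanCLM hv hopt]
  have hzx : ‖z - xstar‖ ≤ (1 + η) * ‖x - z‖ :=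
    calc ‖z - xstar‖ = ‖(x - xstar) - (x - z)‖ := by rw [sub_sub_sub_cancel_left]
      _ ≤ ‖x - xstar‖ + ‖x - z‖ := norm_sub_le _ _
      _ ≤ (1 + η) * ‖x - z‖ := by linarith
  have hC₁δ : C₁ * (δ / 2 * ‖x - z‖ ^ 2) = ((3 + η ^ 2) * opNorm (Cmat ω θ A)
      + 2 * (η ^ 2 + 1) * opNorm A) / 2 * ‖x - z‖ ^ 2 := by
    rw [hC₁]; field_simp
  have hC₁_nonneg : 0 ≤ C₁ := by
    rw [hC₁]; unfold opNorm; positivity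
  calc _ ≤ opNorm A / 2 * ‖z - xstar‖ ^ 2 + opNorm (Cmat ω θ A) * ‖x - z‖ * ‖z - xstar‖ :=
        quadComposite_sub_le_norm_of_prox hBC hA.isSymmetric_toEuclideanCLM hv hopt xstar
    _ ≤ C₁ * (δ / 2 * ‖x - z‖ ^ 2) := by
        rw [hC₁δ]
        exact half_mul_sq_add_mul_le (norm_nonneg _) (norm_nonneg _) (norm_nonneg _)
          (norm_nonneg _) hzx
    _ ≤ _ := mul_le_mul_of_nonneg_left hdescent hC₁_nonneg

/-- key inequality in Theorem 2. -/
theorem msm_key_inequality_thm2 {n : ℕ} (hn : 0 < n)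
    (A : Matrix (Fin n) (Fin n) ℝ) (hA : A.IsSymm) (b : E n) (h : E n → ℝ)
    (ω θ : ℝ) (hω : ω ∈ Set.Ioo (0 : ℝ) 2) (hθ : 0 ≤ θ)
    (δ : ℝ) (hδ : δ = 2 * θ / ω + (2 - ω) / ω * ⨅ i, A i i) (hδpos : 0 < δ)
    (xstar : E n) (hxstar : ∀ y : E n, fObj A b h xstar ≤ fObj A b h y)
    (x z : E n) (hz : IsTriangleProx ω θ A b h x z)
    (η : ℝ) (hη : 0 < η) (herr : ‖x - xstar‖ ≤ η * ‖x - z‖)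
    (C₁ : ℝ)
    (hC₁ : C₁ = ((3 + η ^ 2) * opNorm (Cmat ω θ A)
        + 2 * (η ^ 2 + 1) * opNorm A) / δ) :
    fObj A b h z - fObj A b h xstar ≤ C₁ * (fObj A b h x - fObj A b h z) :=
  msm_key_inequality_thm2_general A hA b h ω θ hω δ hδ hδpos xstar x z hz η herr C₁ hC₁
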